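/- arXiv:2002.09679 — 3 statements merged into one kernel-verified Lean document; each statement's English description precedes it below -/
import Mathlib

section
/- Let n ≥ 1, s ∈ (0,1), r > 0, let Ω ⊆ ℝⁿ be an open set with B_r ⊆ Ω, and let u ∈ ℋ^s(Ω). Assume (the known fractional mean value property on compactly contained balls) that u(0) = ∫_{𝒞B_ρ} u(y) dμ_ρ(y) for every ρ > 0 such that the closed ball of radius ρ centered at 0 is contained in Ω. Then also u(0) = ∫_{𝒞B_r} u(y) dμ_r(y), i.e. u(0) = c(n,s) r^{2s} ∫_{𝒞B_r} u(y)/((|y|² − r²)^s |y|ⁿ) dy. -/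
/-!
For `ρ < r` the closed ball `B̄_ρ` lies in `Ω`, so `u(0) = ∫_{𝒞B_ρ} u dμ_ρ`. Splitting `𝒞B_ρ` into
the annulus `B_r \ B_ρ` and `𝒞B_r`, and bounding `|u| ≤ M` on `B̄_r`, gives
`|u(0) - ∫_{𝒞B_r} u dμ_ρ| ≤ M μ_ρ(B_r \ B_ρ) = M (1 - μ_ρ(𝒞B_r))`.
On `𝒞B_r` the densities of `μ_ρ` increase to that of `μ_r` as `ρ ↑ r`, and `|u| dμ_r` is
integrable there thanks to the growth condition on `u`; dominated convergence therefore lets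
`ρ ↑ r` in both `∫_{𝒞B_r} u dμ_ρ` and `μ_ρ(𝒞B_r)`.
-/

open MeasureTheory Metric Filter Set Topology

noncomputable section

/-- Euclidean space ℝⁿ. -/
abbrev En (n : ℕ) := EuclideanSpace ℝ (Fin n)

/-- The principal-value fractional Laplacian `(-Δ)^s u` vanishes at the point `x`:
`lim_{ε→0⁺} ∫_{|y|>ε} (u(x)-u(x-y))/|y|^{n+2s} dy = 0`. -/
def FracLapVanishesAt (n : ℕ) (s : ℝ) (u : En n → ℝ) (x : En n) : Prop :=
  Tendsto (fun ε : ℝ =>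
      ∫ y in {y : En n | ε < ‖y‖}, (u x - u (x - y)) / ‖y‖ ^ ((n : ℝ) + 2 * s))
    (𝓝[>] (0 : ℝ)) (𝓝 0)

/-- `u ∈ ℋ^s(Ω)`: continuous on ℝⁿ, with `∫ |u(y)|/(1+|y|^{n+2s}) dy < ∞`, and
`(-Δ)^s u = 0` in `Ω`. -/
def MemHs (n : ℕ) (s : ℝ) (Ω : Set (En n)) (u : En n → ℝ) : Prop :=
  Continuous u ∧
    Integrable (fun y : En n => |u y| / (1 + ‖y‖ ^ ((n : ℝ) + 2 * s))) ∧
    ∀ x ∈ Ω, FracLapVanishesAt n s u x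

/-- The density of the measure `μ_r` (with normalizing constant `c = c(n,s)`):
`c r^{2s} / ((|y|² - r²)^s |y|ⁿ)`. -/
def muDen (n : ℕ) (s c r : ℝ) (y : En n) : ℝ :=
  c * r ^ (2 * s) / ((‖y‖ ^ 2 - r ^ 2) ^ s * ‖y‖ ^ (n : ℝ))

/-- `∫_A u dμ_r`. -/
def muInt (n : ℕ) (s c r : ℝ) (A : Set (En n)) (u : En n → ℝ) : ℝ :=
  ∫ y in A, u y * muDen n s c r y

/-- `μ_r(A)`. -/
def muMeas (n : ℕ) (s c r : ℝ) (A : Set (En n)) : ℝ :=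
  ∫ y in A, muDen n s c r y

open scoped Pointwise

namespace FracMeanValue

variable {n : ℕ} {s c r ρ : ℝ}

lemma measurable_muDen (n : ℕ) (s c r : ℝ) : Measurable (muDen n s c r) := by
  unfold muDen
  fun_prop

lemma muDen_nonneg (hc : 0 ≤ c) (hr : 0 ≤ r) {y : En n} (hy : r ≤ ‖y‖) :
    0 ≤ muDen n s c r y := by
  have : 0 ≤ ‖y‖ ^ 2 - r ^ 2 := by nlinarith
  unfold muDen
  positivity

lemma muDen_le_muDen (hc : 0 ≤ c) (hs : 0 ≤ s) (hρ : 0 ≤ ρ) (hρr : ρ ≤ r) {y : En n}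
    (hy : r < ‖y‖) : muDen n s c ρ y ≤ muDen n s c r y := by
  have hyr : 0 < ‖y‖ ^ 2 - r ^ 2 := by nlinarith
  have hy0 : 0 < ‖y‖ := hρ.trans_lt (hρr.trans_lt hy)
  unfold muDen
  gcongr
  exact mul_nonneg hc (Real.rpow_nonneg (hρ.trans hρr) _)

lemma continuousAt_muDen_radius (n : ℕ) (s c : ℝ) (hr : 0 < r) {y : En n} (hy : r < ‖y‖) :
    ContinuousAt (fun ρ => muDen n s c ρ y) r := by
  have hyr : 0 < ‖y‖ ^ 2 - r ^ 2 := by nlinarith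
  have hy0 : 0 < ‖y‖ := hr.trans hy
  unfold muDen
  fun_prop (disch := first | positivity | exact Or.inl hyr.ne' | exact Or.inl hr.ne')

lemma muDen_smul (hρ : 0 < ρ) {x : En n} (hx : 1 ≤ ‖x‖) :
    muDen n s c ρ (ρ • x) = (ρ ^ n)⁻¹ * muDen n s c 1 x := by
  have hx1 : 0 ≤ ‖x‖ ^ 2 - 1 := by nlinarith
  have hρs : (ρ ^ 2) ^ s = ρ ^ (2 * s) := by
    rw [← Real.rpow_natCast_mul hρ.le]; norm_num
  have hbase : ‖ρ • x‖ ^ 2 - ρ ^ 2 = ρ ^ 2 * (‖x‖ ^ 2 - 1) := by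
    rw [norm_smul, Real.norm_of_nonneg hρ.le]; ring
  have hnorm : ‖ρ • x‖ ^ (n : ℝ) = ρ ^ n * ‖x‖ ^ (n : ℝ) := by
    rw [norm_smul, Real.norm_of_nonneg hρ.le, Real.mul_rpow hρ.le (norm_nonneg x),
      Real.rpow_natCast]
  have hρ2s : 0 < ρ ^ (2 * s) := by positivity
  simp only [muDen, hbase, hnorm, Real.mul_rpow (sq_nonneg ρ) hx1, hρs, Real.one_rpow, one_pow,
    mul_one]
  field_simp

lemma muInt_one (A : Set (En n)) : muInt n s c r A (fun _ => 1) = muMeas n s c r A := by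
  simp only [muInt, muMeas, one_mul]

lemma muMeas_one_compl_ball (n : ℕ) (s c : ℝ) :
    muMeas n s c 1 (ball (0 : En n) 1)ᶜ =
      c * ∫ y in (ball (0 : En n) 1)ᶜ, ((‖y‖ ^ 2 - 1) ^ s * ‖y‖ ^ (n : ℝ))⁻¹ := by
  simp only [muMeas, muDen, Real.one_rpow, one_pow, mul_one, div_eq_mul_inv, integral_const_mul]

lemma muMeas_compl_ball (hρ : 0 < ρ) :
    muMeas n s c ρ (ball (0 : En n) ρ)ᶜ = muMeas n s c 1 (ball (0 : En n) 1)ᶜ := by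
  have hball : ρ • (ball (0 : En n) 1)ᶜ = (ball 0 ρ)ᶜ := by
    ext x
    simp [mem_smul_set_iff_inv_smul_mem₀ hρ.ne', norm_smul, abs_of_pos hρ, le_inv_mul_iff₀ hρ]
  have h := Measure.setIntegral_comp_smul_of_pos volume (muDen n s c ρ) (ball (0 : En n) 1)ᶜ hρ
  rw [hball, finrank_euclideanSpace_fin, smul_eq_mul,
    setIntegral_congr_fun measurableSet_ball.compl
      fun x hx => muDen_smul hρ (by simpa using hx), integral_const_mul] at h
  exact (mul_left_cancel₀ (by positivity) h).symm

lemma muDen_le_of_two_mul_le_norm (hc : 0 ≤ c) (hs : 0 ≤ s) (hr : 0 ≤ r) {y : En n}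
    (hy : 2 * r ≤ ‖y‖) (hy0 : 0 < ‖y‖) :
    muDen n s c r y ≤ c * (2 * r) ^ (2 * s) / ‖y‖ ^ ((n : ℝ) + 2 * s) := by
  have hquarter : (‖y‖ / 2) ^ 2 ≤ ‖y‖ ^ 2 - r ^ 2 := by nlinarith
  have hsq : ((‖y‖ / 2) ^ 2) ^ s = ‖y‖ ^ (2 * s) / 2 ^ (2 * s) := by
    rw [← Real.rpow_natCast_mul (by positivity), Real.div_rpow hy0.le zero_le_two]; norm_num
  calc muDen n s c r y
      ≤ c * r ^ (2 * s) / (((‖y‖ / 2) ^ 2) ^ s * ‖y‖ ^ (n : ℝ)) := by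
        unfold muDen; gcongr
    _ = c * (2 * r) ^ (2 * s) / ‖y‖ ^ ((n : ℝ) + 2 * s) := by
        rw [hsq, Real.mul_rpow zero_le_two hr, Real.rpow_add hy0]
        field_simp

lemma muDen_le_of_max_le_norm (hc : 0 ≤ c) (hs : 0 ≤ s) (hr : 0 ≤ r) {y : En n}
    (hy : max (2 * r) 1 ≤ ‖y‖) :
    muDen n s c r y ≤ 2 * c * (2 * r) ^ (2 * s) / (1 + ‖y‖ ^ ((n : ℝ) + 2 * s)) := by
  have hy1 : 1 ≤ ‖y‖ := le_of_max_le_right hy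
  have hpow : 1 ≤ ‖y‖ ^ ((n : ℝ) + 2 * s) := Real.one_le_rpow hy1 (by positivity)
  calc muDen n s c r y ≤ c * (2 * r) ^ (2 * s) / ‖y‖ ^ ((n : ℝ) + 2 * s) :=
        muDen_le_of_two_mul_le_norm hc hs hr (le_of_max_le_left hy) (by linarith)
    _ ≤ 2 * c * (2 * r) ^ (2 * s) / (1 + ‖y‖ ^ ((n : ℝ) + 2 * s)) := by
        rw [div_le_div_iff₀ (by linarith) (by linarith)]
        have : 0 ≤ c * (2 * r) ^ (2 * s) := by positivity
        nlinarith

lemma integrableOn_mul_muDen (hc : 0 ≤ c) (hs : 0 ≤ s) (hr : 0 ≤ r) {v : En n → ℝ}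
    (hv : Continuous v) (hv_int : Integrable fun y => |v y| / (1 + ‖y‖ ^ ((n : ℝ) + 2 * s)))
    (hμ : IntegrableOn (muDen n s c r) (ball 0 r)ᶜ) :
    IntegrableOn (fun y => v y * muDen n s c r y) (ball 0 r)ᶜ := by
  set R := max (2 * r) 1
  have hcover : (ball (0 : En n) r)ᶜ ⊆ ((ball 0 r)ᶜ ∩ closedBall 0 R) ∪ (ball 0 R)ᶜ := by
    intro y hy
    by_cases hyR : y ∈ closedBall (0 : En n) R
    · exact Or.inl ⟨hy, hyR⟩
    · exact Or.inr fun h => hyR (ball_subset_closedBall h)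
  refine IntegrableOn.mono_set (IntegrableOn.union ?_ ?_) hcover
  · exact (hμ.mono_set inter_subset_left).continuousOn_mul_of_subset hv.continuousOn
      (isCompact_closedBall 0 R) (measurableSet_ball.compl.inter measurableSet_closedBall)
      inter_subset_right
  · refine (hv_int.integrableOn.const_mul (2 * c * (2 * r) ^ (2 * s))).mono'
      (hv.aestronglyMeasurable.mul (measurable_muDen n s c r).aestronglyMeasurable)
      (ae_restrict_of_forall_mem measurableSet_ball.compl fun y hy => ?_)
    have hRy : R ≤ ‖y‖ := by simpa using hy
    have hry : r ≤ ‖y‖ := by linarith [le_max_left (2 * r) 1]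
    rw [Real.norm_eq_abs, abs_mul, abs_of_nonneg (muDen_nonneg hc hr hry), mul_div_assoc',
      mul_comm _ |v y|, mul_div_assoc]
    exact mul_le_mul_of_nonneg_left (muDen_le_of_max_le_norm hc hs hr hRy) (abs_nonneg _)

lemma ae_lt_norm_restrict_compl_ball {E : Type*} [NormedAddCommGroup E] [NormedSpace ℝ E]
    [MeasurableSpace E] [BorelSpace E] [FiniteDimensional ℝ E] (μ : Measure E)
    [μ.IsAddHaarMeasure] (hr : r ≠ 0) :
    ∀ᵐ y ∂μ.restrict (ball (0 : E) r)ᶜ, r < ‖y‖ := by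
  have hsphere : ∀ᵐ y ∂μ, y ∉ sphere (0 : E) r :=
    measure_eq_zero_iff_ae_notMem.1 (Measure.addHaar_sphere_of_ne_zero μ 0 hr)
  filter_upwards [ae_restrict_of_ae hsphere, ae_restrict_mem measurableSet_ball.compl]
    with y hy hyr
  simp only [mem_sphere_iff_norm, sub_zero, mem_compl_iff, mem_ball_zero_iff, not_lt] at hy hyr
  exact hyr.lt_of_ne' hy

lemma tendsto_muInt_compl_ball (hc : 0 ≤ c) (hs : 0 ≤ s) (hr : 0 < r) {v : En n → ℝ}
    (hv : AEStronglyMeasurable v (volume.restrict (ball 0 r)ᶜ))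
    (hv_int : IntegrableOn (fun y => v y * muDen n s c r y) (ball 0 r)ᶜ) :
    Tendsto (fun ρ => muInt n s c ρ (ball 0 r)ᶜ v) (𝓝[<] r)
      (𝓝 (muInt n s c r (ball 0 r)ᶜ v)) := by
  have hfar := ae_lt_norm_restrict_compl_ball volume hr.ne' (E := En n)
  refine tendsto_integral_filter_of_dominated_convergence _
    (Eventually.of_forall fun ρ => hv.mul (measurable_muDen n s c ρ).aestronglyMeasurable)
    ?_ hv_int.norm ?_
  · filter_upwards [Ioo_mem_nhdsLT hr] with ρ hρ
    filter_upwards [hfar] with y hy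
    rw [norm_mul, norm_mul, Real.norm_of_nonneg (muDen_nonneg hc hρ.1.le (hρ.2.trans hy).le),
      Real.norm_of_nonneg (muDen_nonneg hc hr.le hy.le)]
    exact mul_le_mul_of_nonneg_left (muDen_le_muDen hc hs hρ.1.le hρ.2.le hy) (norm_nonneg _)
  · filter_upwards [hfar] with y hy
    exact ((continuousAt_muDen_radius n s c hr hy).tendsto.mono_left
      nhdsWithin_le_nhds).const_mul (v y)

lemma abs_muInt_sub_muInt_compl_ball_le (hc : 0 ≤ c) (hρ : 0 ≤ ρ) (hρr : ρ ≤ r)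
    {u : En n → ℝ} {M : ℝ} (hM : ∀ y ∈ ball (0 : En n) r, ‖u y‖ ≤ M)
    (hu : IntegrableOn (fun y => u y * muDen n s c ρ y) (ball 0 ρ)ᶜ)
    (hμ : IntegrableOn (muDen n s c ρ) (ball 0 ρ)ᶜ) :
    |muInt n s c ρ (ball 0 ρ)ᶜ u - muInt n s c ρ (ball 0 r)ᶜ u| ≤
      M * (muMeas n s c ρ (ball 0 ρ)ᶜ - muMeas n s c ρ (ball 0 r)ᶜ) := by
  have hsub : (ball (0 : En n) r)ᶜ ⊆ (ball 0 ρ)ᶜ := compl_subset_compl.2 (ball_subset_ball hρr)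
  have hannulus : MeasurableSet ((ball (0 : En n) ρ)ᶜ \ (ball 0 r)ᶜ) :=
    measurableSet_ball.compl.diff measurableSet_ball.compl
  rw [muInt, muInt, muMeas, muMeas, ← setIntegral_sdiff measurableSet_ball.compl hu hsub,
    ← setIntegral_sdiff measurableSet_ball.compl hμ hsub, ← integral_const_mul, ← Real.norm_eq_abs]
  refine norm_integral_le_of_norm_le ((hμ.mono_set sdiff_subset).const_mul M)
    (ae_restrict_of_forall_mem hannulus fun y hy => ?_)
  have hy : ρ ≤ ‖y‖ ∧ ‖y‖ < r := by simpa using hy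
  rw [norm_mul, Real.norm_of_nonneg (muDen_nonneg hc hρ hy.1)]
  exact mul_le_mul_of_nonneg_right (hM y (by simpa using hy.2)) (muDen_nonneg hc hρ hy.1)

end FracMeanValue

open FracMeanValue in
theorem mean_value_on_ball_touching_boundary_general
    (n : ℕ) (s : ℝ) (hs : s ∈ Ioo (0 : ℝ) 1)
    (c : ℝ) (hc : 0 < c)
    (hnorm : c * ∫ y in (ball (0 : En n) 1)ᶜ, ((‖y‖ ^ 2 - 1) ^ s * ‖y‖ ^ (n : ℝ))⁻¹ = 1)
    (r : ℝ) (hr : 0 < r)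
    (Ω : Set (En n)) (hball : ball (0 : En n) r ⊆ Ω)
    (u : En n → ℝ) (hu : MemHs n s Ω u)
    (hmvp : ∀ ρ : ℝ, 0 < ρ → closedBall (0 : En n) ρ ⊆ Ω →
      u 0 = muInt n s c ρ (ball (0 : En n) ρ)ᶜ u) :
    u 0 = muInt n s c r (ball (0 : En n) r)ᶜ u := by
  obtain ⟨hu_cont, hu_int, -⟩ := hu
  have hmass (ρ : ℝ) (hρ : 0 < ρ) : muMeas n s c ρ (ball 0 ρ)ᶜ = 1 := by
    rw [muMeas_compl_ball hρ, muMeas_one_compl_ball, hnorm]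
  have hμ (ρ : ℝ) (hρ : 0 < ρ) : IntegrableOn (muDen n s c ρ) (ball 0 ρ)ᶜ :=
    .of_integral_ne_zero ((hmass ρ hρ).trans_ne one_ne_zero)
  have huμ (ρ : ℝ) (hρ : 0 < ρ) : IntegrableOn (fun y => u y * muDen n s c ρ y) (ball 0 ρ)ᶜ :=
    integrableOn_mul_muDen hc.le hs.1.le hρ.le hu_cont hu_int (hμ ρ hρ)
  obtain ⟨M, hM⟩ := (isCompact_closedBall (0 : En n) r).exists_bound_of_continuousOn
    hu_cont.continuousOn
  have herror : ∀ᶠ ρ in 𝓝[<] r,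
      |u 0 - muInt n s c ρ (ball 0 r)ᶜ u| ≤ M * (1 - muMeas n s c ρ (ball 0 r)ᶜ) := by
    filter_upwards [Ioo_mem_nhdsLT hr] with ρ ⟨hρ, hρr⟩
    rw [hmvp ρ hρ ((closedBall_subset_ball hρr).trans hball), ← hmass ρ hρ]
    exact abs_muInt_sub_muInt_compl_ball_le hc.le hρ.le hρr.le
      (fun y hy => hM y (ball_subset_closedBall hy)) (huμ ρ hρ) (hμ ρ hρ)
  have hlim_u := tendsto_muInt_compl_ball hc.le hs.1.le hr hu_cont.aestronglyMeasurable (huμ r hr)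
  have hlim_mass : Tendsto (fun ρ => muMeas n s c ρ (ball 0 r)ᶜ) (𝓝[<] r) (𝓝 1) := by
    have h := tendsto_muInt_compl_ball hc.le hs.1.le hr
      aestronglyMeasurable_const (v := fun _ => 1) (by simpa using hμ r hr)
    simp only [muInt_one] at h
    rwa [hmass r hr] at h
  have hlimit : |u 0 - muInt n s c r (ball 0 r)ᶜ u| ≤ M * (1 - 1) :=
    le_of_tendsto_of_tendsto ((tendsto_const_nhds.sub hlim_u).abs)
      ((tendsto_const_nhds.sub hlim_mass).const_mul M) herror
  simpa [sub_eq_zero] using hlimit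

/-- Lemma A.1 of the paper: if `Ω` is open, `B_r ⊆ Ω`, `u ∈ ℋ^s(Ω)`,
and the fractional mean value property holds on every ball whose closure is contained in
`Ω`, then it also holds on `B_r`. -/
theorem mean_value_on_ball_touching_boundary
    (n : ℕ) (hn : 1 ≤ n) (s : ℝ) (hs : s ∈ Ioo (0 : ℝ) 1)
    (c : ℝ) (hc : 0 < c)
    (hnorm : c * ∫ y in (ball (0 : En n) 1)ᶜ, ((‖y‖ ^ 2 - 1) ^ s * ‖y‖ ^ (n : ℝ))⁻¹ = 1)
    (r : ℝ) (hr : 0 < r)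
    (Ω : Set (En n)) (hΩopen : IsOpen Ω) (hball : ball (0 : En n) r ⊆ Ω)
    (u : En n → ℝ) (hu : MemHs n s Ω u)
    (hmvp : ∀ ρ : ℝ, 0 < ρ → closedBall (0 : En n) ρ ⊆ Ω →
      u 0 = muInt n s c ρ (ball (0 : En n) ρ)ᶜ u) :
    u 0 = muInt n s c r (ball (0 : En n) r)ᶜ u :=
  mean_value_on_ball_touching_boundary_general n s hs c hc hnorm r hr Ω hball u hu hmvp
end
end

section
/- Let n ≥ 1, s ∈ (0,1), c(n,s) > 0, p ∈ ℝⁿ, ν ∈ ℝⁿ a unit vector, r_int, r_ext > 0, and set x_int := p − r_int ν and x_ext := p + r_ext ν. Let x̄ ∈ ℝⁿ with |x̄ − x_int| < r_int and |x̄ − x_ext| > r_ext, and let P : (0, t₀) → ℝ (for some t₀ ∈ (0, r_ext)) satisfy, for every t ∈ (0, t₀), c(n,s)(r_int² − |x̄ − x_int|²)^s/((|p + tν − x_int|² − r_int²)^s |x̄ − p − tν|ⁿ) ≤ P(t) ≤ c(n,s)(|x̄ − x_ext|² − r_ext²)^s/((r_ext² − |p + tν − x_ext|²)^s |x̄ −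 p − tν|ⁿ). Then (c(n,s)/(2^s r_int^s |x̄ − p|ⁿ)) (2 r_int ν·(p − x̄) − |x̄ − p|²)^s ≤ liminf_{t→0⁺} P(t) t^s ≤ limsup_{t→0⁺} P(t) t^s ≤ (c(n,s)/(2^s r_ext^s |x̄ − p|ⁿ)) (2 r_ext ν·(p − x̄) + |x̄ − p|²)^s. -/
/-!
Along the normal ray the kernel denominators factor as
`|p + tν - x_int|² - r_int² = t (2 r_int + t)` and `r_ext² - |p + tν - x_ext|² = t (2 r_ext - t)`,
so multiplying both bounds by `t^s` cancels the singular factor and leaves functions continuous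
at `t = 0`. Their values there, with `r_int² - |x̄ - x_int|²` and `|x̄ - x_ext|² - r_ext²` expanded
around `p`, are the two constants, and `P(t) t^s` is squeezed between them.
-/

open MeasureTheory Metric Filter Set Topology

noncomputable section

theorem le_liminf_le_limsup_le_of_squeeze {α β : Type*} [ConditionallyCompleteLinearOrder β]
    [TopologicalSpace β] [OrderTopology β] {l : Filter α} [l.NeBot] {f g h : α → β} {a b : β}
    (hg : Tendsto g l (𝓝 a)) (hh : Tendsto h l (𝓝 b)) (hgf : g ≤ᶠ[l] f) (hfh : f ≤ᶠ[l] h) :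
    a ≤ liminf f l ∧ liminf f l ≤ limsup f l ∧ limsup f l ≤ b := by
  have hf_ge : l.IsBoundedUnder (· ≥ ·) f := hg.isBoundedUnder_ge.mono_ge hgf
  have hf_le : l.IsBoundedUnder (· ≤ ·) f := hh.isBoundedUnder_le.mono_le hfh
  refine ⟨?_, liminf_le_limsup hf_le hf_ge, ?_⟩
  · rw [← hg.liminf_eq]
    exact liminf_le_liminf hgf hg.isBoundedUnder_ge hf_le.isCoboundedUnder_ge
  · rw [← hh.limsup_eq]
    exact limsup_le_limsup hfh hf_ge.isCoboundedUnder_le hh.isBoundedUnder_le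

section UnitVector

variable {E : Type*} [NormedAddCommGroup E] [InnerProductSpace ℝ E] {ν : E}

theorem norm_sub_add_smul_sq_of_norm_eq_one (hν : ‖ν‖ = 1) (x p : E) (r : ℝ) :
    ‖x - (p + r • ν)‖ ^ 2 = ‖x - p‖ ^ 2 + 2 * r * inner ℝ ν (p - x) + r ^ 2 := by
  rw [← sub_sub, norm_sub_sq_real, real_inner_smul_right, norm_smul, hν, Real.norm_eq_abs,
    mul_one, sq_abs, ← neg_sub x p, inner_neg_right, real_inner_comm]
  ring

theorem norm_add_smul_sub_add_smul_sq_of_norm_eq_one (hν : ‖ν‖ = 1) (p : E) (t r : ℝ) :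
    ‖p + t • ν - (p + r • ν)‖ ^ 2 = (t - r) ^ 2 := by
  rw [add_sub_add_left_eq_sub, ← sub_smul, norm_smul, hν, Real.norm_eq_abs, mul_one, sq_abs]

end UnitVector

theorem tendsto_div_mul_rpow_mul_rpow_nhdsGT {q D : ℝ → ℝ} {K s : ℝ}
    (hq : ContinuousAt q 0) (hq0 : 0 < q 0) (hD : ContinuousAt D 0) (hD0 : D 0 ≠ 0) :
    Tendsto (fun t => K / ((t * q t) ^ s * D t) * t ^ s) (𝓝[>] 0)
      (𝓝 (K / (q 0 ^ s * D 0))) := by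
  have hcont : ContinuousAt (fun t => K / (q t ^ s * D t)) 0 :=
    continuousAt_const.div ((hq.rpow_const (Or.inl hq0.ne')).mul hD)
      (mul_ne_zero (Real.rpow_pos_of_pos hq0 s).ne' hD0)
  refine hcont.continuousWithinAt.tendsto.congr' ?_
  filter_upwards [self_mem_nhdsWithin, nhdsWithin_le_nhds (hq.eventually (lt_mem_nhds hq0))]
    with t (ht : 0 < t) hqt
  have hts : t ^ s ≠ 0 := (Real.rpow_pos_of_pos ht s).ne'
  rw [Real.mul_rpow ht.le hqt.le, mul_assoc, div_mul_eq_mul_div, mul_comm K,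
    mul_div_mul_left _ _ hts]

theorem poisson_tangent_ball_sandwich_general
    (n : ℕ) (s : ℝ)
    (c : ℝ)
    (p ν : En n) (hν : ‖ν‖ = 1)
    (rint rext : ℝ) (hrint : 0 < rint) (hrext : 0 < rext)
    (xint xext : En n) (hxint : xint = p - rint • ν) (hxext : xext = p + rext • ν)
    (xbar : En n) (hxbar_ext : rext < ‖xbar - xext‖)
    (t₀ : ℝ) (ht₀ : t₀ ∈ Ioo (0 : ℝ) rext)
    (P : ℝ → ℝ)
    (hsandwich : ∀ t ∈ Ioo (0 : ℝ) t₀,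
      c * (rint ^ 2 - ‖xbar - xint‖ ^ 2) ^ s /
          ((‖p + t • ν - xint‖ ^ 2 - rint ^ 2) ^ s * ‖xbar - (p + t • ν)‖ ^ (n : ℝ))
        ≤ P t ∧
      P t ≤ c * (‖xbar - xext‖ ^ 2 - rext ^ 2) ^ s /
          ((rext ^ 2 - ‖p + t • ν - xext‖ ^ 2) ^ s * ‖xbar - (p + t • ν)‖ ^ (n : ℝ))) :
    c / (2 ^ s * rint ^ s * ‖xbar - p‖ ^ (n : ℝ)) *
        (2 * rint * (inner ℝ ν (p - xbar) : ℝ) - ‖xbar - p‖ ^ 2) ^ s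
      ≤ liminf (fun t : ℝ => P t * t ^ s) (𝓝[>] (0 : ℝ)) ∧
    liminf (fun t : ℝ => P t * t ^ s) (𝓝[>] (0 : ℝ))
      ≤ limsup (fun t : ℝ => P t * t ^ s) (𝓝[>] (0 : ℝ)) ∧
    limsup (fun t : ℝ => P t * t ^ s) (𝓝[>] (0 : ℝ))
      ≤ c / (2 ^ s * rext ^ s * ‖xbar - p‖ ^ (n : ℝ)) *
          (2 * rext * (inner ℝ ν (p - xbar) : ℝ) + ‖xbar - p‖ ^ 2) ^ s := by
  rw [sub_eq_add_neg p, ← neg_smul] at hxint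
  subst hxint hxext
  have hxbar : 0 < ‖xbar - p‖ := by
    refine norm_pos_iff.2 fun h => hxbar_ext.ne ?_
    rw [sub_eq_zero.1 h, sub_add_cancel_left, norm_neg, norm_smul, hν, Real.norm_eq_abs,
      abs_of_pos hrext, mul_one]
  set D : ℝ → ℝ := fun t => ‖xbar - (p + t • ν)‖ ^ (n : ℝ)
  have hD : ContinuousAt D 0 := by fun_prop (disch := exact Or.inr n.cast_nonneg)
  have hD0 : D 0 = ‖xbar - p‖ ^ (n : ℝ) := by simp [D]
  have hint := tendsto_div_mul_rpow_mul_rpow_nhdsGT (q := fun t => 2 * rint + t)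
    (K := c * (rint ^ 2 - ‖xbar - (p + -rint • ν)‖ ^ 2) ^ s) (s := s)
    (by fun_prop) (by simpa using hrint) hD (by rw [hD0]; positivity)
  have hext := tendsto_div_mul_rpow_mul_rpow_nhdsGT (q := fun t => 2 * rext - t)
    (K := c * (‖xbar - (p + rext • ν)‖ ^ 2 - rext ^ 2) ^ s) (s := s)
    (by fun_prop) (by simpa using hrext) hD (by rw [hD0]; positivity)
  have hint_lim : c * (rint ^ 2 - ‖xbar - (p + -rint • ν)‖ ^ 2) ^ s / ((2 * rint + 0) ^ s * D 0)
      = c / (2 ^ s * rint ^ s * ‖xbar - p‖ ^ (n : ℝ)) *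
        (2 * rint * inner ℝ ν (p - xbar) - ‖xbar - p‖ ^ 2) ^ s := by
    rw [norm_sub_add_smul_sq_of_norm_eq_one hν, hD0, add_zero, Real.mul_rpow two_pos.le hrint.le]
    ring_nf
  have hext_lim : c * (‖xbar - (p + rext • ν)‖ ^ 2 - rext ^ 2) ^ s / ((2 * rext - 0) ^ s * D 0)
      = c / (2 ^ s * rext ^ s * ‖xbar - p‖ ^ (n : ℝ)) *
        (2 * rext * inner ℝ ν (p - xbar) + ‖xbar - p‖ ^ 2) ^ s := by
    rw [norm_sub_add_smul_sq_of_norm_eq_one hν, hD0, sub_zero, Real.mul_rpow two_pos.le hrext.le]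
    ring_nf
  rw [hint_lim] at hint
  rw [hext_lim] at hext
  refine le_liminf_le_limsup_le_of_squeeze hint hext ?_ ?_ <;>
    filter_upwards [Ioo_mem_nhdsGT ht₀.1] with t ht <;>
    refine mul_le_mul_of_nonneg_right ?_ (Real.rpow_nonneg ht.1.le s)
  · have hnormal : ‖p + t • ν - (p + -rint • ν)‖ ^ 2 - rint ^ 2 = t * (2 * rint + t) := by
      rw [norm_add_smul_sub_add_smul_sq_of_norm_eq_one hν]; ring
    simpa only [hnormal] using (hsandwich t ht).1
  · have hnormal : rext ^ 2 - ‖p + t • ν - (p + rext • ν)‖ ^ 2 = t * (2 * rext - t) := by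
      rw [norm_add_smul_sub_add_smul_sq_of_norm_eq_one hν]; ring
    simpa only [hnormal] using (hsandwich t ht).2

/-- Lemma 2.4 of the paper: if `P(t)` is sandwiched between the
Poisson kernels of the interior tangent ball `B_{r_int}(x_int)` and of the complement
of the exterior tangent ball `B_{r_ext}(x_ext)` evaluated at `x̄` and `p + tν`, then
`liminf_{t→0⁺} P(t) t^s` and `limsup_{t→0⁺} P(t) t^s` satisfy the stated two-sided
bounds. -/
theorem poisson_tangent_ball_sandwich
    (n : ℕ) (hn : 1 ≤ n) (s : ℝ) (hs : s ∈ Ioo (0 : ℝ) 1)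
    (c : ℝ) (hc : 0 < c)
    (p ν : En n) (hν : ‖ν‖ = 1)
    (rint rext : ℝ) (hrint : 0 < rint) (hrext : 0 < rext)
    (xint xext : En n) (hxint : xint = p - rint • ν) (hxext : xext = p + rext • ν)
    (xbar : En n) (hxbar_int : ‖xbar - xint‖ < rint) (hxbar_ext : rext < ‖xbar - xext‖)
    (t₀ : ℝ) (ht₀ : t₀ ∈ Ioo (0 : ℝ) rext)
    (P : ℝ → ℝ)
    (hsandwich : ∀ t ∈ Ioo (0 : ℝ) t₀,
      c * (rint ^ 2 - ‖xbar - xint‖ ^ 2) ^ s /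
          ((‖p + t • ν - xint‖ ^ 2 - rint ^ 2) ^ s * ‖xbar - (p + t • ν)‖ ^ (n : ℝ))
        ≤ P t ∧
      P t ≤ c * (‖xbar - xext‖ ^ 2 - rext ^ 2) ^ s /
          ((rext ^ 2 - ‖p + t • ν - xext‖ ^ 2) ^ s * ‖xbar - (p + t • ν)‖ ^ (n : ℝ))) :
    c / (2 ^ s * rint ^ s * ‖xbar - p‖ ^ (n : ℝ)) *
        (2 * rint * (inner ℝ ν (p - xbar) : ℝ) - ‖xbar - p‖ ^ 2) ^ s
      ≤ liminf (fun t : ℝ => P t * t ^ s) (𝓝[>] (0 : ℝ)) ∧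
    liminf (fun t : ℝ => P t * t ^ s) (𝓝[>] (0 : ℝ))
      ≤ limsup (fun t : ℝ => P t * t ^ s) (𝓝[>] (0 : ℝ)) ∧
    limsup (fun t : ℝ => P t * t ^ s) (𝓝[>] (0 : ℝ))
      ≤ c / (2 ^ s * rext ^ s * ‖xbar - p‖ ^ (n : ℝ)) *
          (2 * rext * (inner ℝ ν (p - xbar) : ℝ) + ‖xbar - p‖ ^ 2) ^ s :=
  poisson_tangent_ball_sandwich_general n s c p ν hν rint rext hrint hrext xint xext hxint hxext
    xbar hxbar_ext t₀ ht₀ P hsandwich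

end
end

section
/- Let n ≥ 1, s ∈ (0,1), c(n,s) > 0, p ∈ ℝⁿ, ν ∈ ℝⁿ a unit vector, r_int, r_ext > 0, and set x_int := p − r_int ν, x_ext := p + r_ext ν, x̄_η := η x_int + (1−η) p for η ∈ (0,1). Let x₀ ∈ ℝⁿ and let P : ({x₀} ∪ B_{r_int}(x_int)) × (0, t₀) → (0,∞) (for some t₀ ∈ (0, r_ext)) satisfy: (a) for every η ∈ (0,1) and every t ∈ (0, t₀), c(n,s)(r_int² − |x̄_η − x_int|²)^s/((|p + tν − x_int|² − r_int²)^s |x̄_η − p − tν|ⁿ) ≤ P(x̄_η, t) ≤ c(n,s)(|x̄_η − x_ext|² − r_ext²)^s/((r_ext² − |p + tν − x_ext|²)^s |x̄_η − p − tν|ⁿ); (b) for every η ∈ (0,1) the limit M_η := lim_{t→0⁺} P(x̄_η, t)/P(x₀, t) exists and lies in (0, ∞). Then the limit lim_{t→0⁺} P(x₀, t) t^s exists and is finite. -/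
open MeasureTheory Metric Filter Set Topology

noncomputable section

/-!
Along the normal ray, `t ^ s` times the Poisson kernel of the interior tangent ball
`B_{r_int}(x_int)`, resp. of the exterior of `B_{r_ext}(x_ext)`, has an explicit limit `A_η`,
resp. `B_η`, as `t → 0⁺`. By (a) these squeeze `t ^ s P(x̄_η, t)`, and dividing by the Martin
ratio of (b) gives `A_η / M_η ≤ liminf t ^ s P(x₀, t) ≤ limsup t ^ s P(x₀, t) ≤ B_η / M_η`.
Hence `limsup ≤ (B_η / A_η) liminf`, and `B_η / A_η → 1` as `x̄_η → p`, i.e. as `η → 0⁺`.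
-/

theorem Filter.exists_tendsto_of_squeeze_ratio_tendsto_one {α ι : Type*}
    {l : Filter α} [l.NeBot] {F : Filter ι} [F.NeBot] {f : α → ℝ} {a b : ι → ℝ}
    (hab : Tendsto (fun i => b i / a i) F (𝓝 1))
    (hsq : ∀ᶠ i in F, ∃ (M : ℝ) (lo hi : α → ℝ), Tendsto lo l (𝓝 (a i / M)) ∧
      Tendsto hi l (𝓝 (b i / M)) ∧ lo ≤ᶠ[l] f ∧ f ≤ᶠ[l] hi) :
    ∃ L, Tendsto f l (𝓝 L) := by
  obtain ⟨_, _, lo₀, hi₀, hlo₀, hhi₀, hlof₀, hfhi₀⟩ := hsq.exists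
  have hbdd_le : IsBoundedUnder (· ≤ ·) l f := hhi₀.isBoundedUnder_le.mono_le hfhi₀
  have hbdd_ge : IsBoundedUnder (· ≥ ·) l f := hlo₀.isBoundedUnder_ge.mono_ge hlof₀
  have hstep : ∀ᶠ i in F, limsup f l ≤ b i / a i * liminf f l := by
    filter_upwards [hsq, hab.eventually_const_lt one_pos]
      with i ⟨M, lo, hi, hlo, hhi, hlof, hfhi⟩ hpos
    have ha : a i ≠ 0 := by rintro h; simp [h] at hpos
    calc limsup f l ≤ b i / M :=
          (limsup_le_limsup hfhi hbdd_ge.isCoboundedUnder_le hhi.isBoundedUnder_le).trans_eq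
            hhi.limsup_eq
      _ = b i / a i * (a i / M) := by field_simp
      _ ≤ b i / a i * liminf f l := by
          gcongr
          exact hlo.liminf_eq.symm.trans_le
            (liminf_le_liminf hlof hlo.isBoundedUnder_ge hbdd_le.isCoboundedUnder_ge)
  have hsup_le_inf : limsup f l ≤ liminf f l := by
    simpa using ge_of_tendsto (hab.mul_const (liminf f l)) hstep
  exact ⟨_, tendsto_of_liminf_eq_limsup
    (le_antisymm (liminf_le_limsup hbdd_le hbdd_ge) hsup_le_inf) rfl hbdd_le hbdd_ge⟩

theorem div_div_le_mul_of_le {x y z w : ℝ} (hxy : 0 < y / x) (h : z ≤ y * w) :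
    z / (y / x) ≤ x * w := by
  obtain ⟨hy, hx⟩ := div_ne_zero_iff.mp hxy.ne'
  calc z / (y / x) ≤ y * w / (y / x) := by gcongr
    _ = x * w := by field_simp

theorem mul_le_div_div_of_le {x y z w : ℝ} (hxy : 0 < y / x) (h : y * w ≤ z) :
    x * w ≤ z / (y / x) := by
  obtain ⟨hy, hx⟩ := div_ne_zero_iff.mp hxy.ne'
  calc x * w = y * w / (y / x) := by field_simp
    _ ≤ z / (y / x) := by gcongr

theorem norm_smul_of_norm_eq_one {E : Type*} [SeminormedAddCommGroup E] [NormedSpace ℝ E]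
    {ν : E} (hν : ‖ν‖ = 1) (r : ℝ) : ‖r • ν‖ = |r| := by
  rw [norm_smul, hν, mul_one, Real.norm_eq_abs]

def ballPoissonKernel {n : ℕ} (c s : ℝ) (z : En n) (R : ℝ) (x y : En n) : ℝ :=
  c * (R ^ 2 - ‖x - z‖ ^ 2) ^ s / ((‖y - z‖ ^ 2 - R ^ 2) ^ s * ‖x - y‖ ^ (n : ℝ))

def exteriorBallPoissonKernel {n : ℕ} (c s : ℝ) (z : En n) (R : ℝ) (x y : En n) : ℝ :=
  c * (‖x - z‖ ^ 2 - R ^ 2) ^ s / ((R ^ 2 - ‖y - z‖ ^ 2) ^ s * ‖x - y‖ ^ (n : ℝ))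

def ballPoissonKernelBoundaryLimit (n : ℕ) (c s R a : ℝ) : ℝ :=
  c * (a * (2 * R - a)) ^ s / ((2 * R) ^ s * a ^ (n : ℝ))

def exteriorBallPoissonKernelBoundaryLimit (n : ℕ) (c s R a : ℝ) : ℝ :=
  c * (a * (a + 2 * R)) ^ s / ((2 * R) ^ s * a ^ (n : ℝ))

section NormalRay

variable {n : ℕ} {c s R a t : ℝ} {p ν : En n}

theorem ballPoissonKernel_normalRay_mul_rpow (hν : ‖ν‖ = 1) (hR : 0 ≤ R) (ha : 0 ≤ a)
    (ht : 0 < t) :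
    ballPoissonKernel c s (p - R • ν) R (p - a • ν) (p + t • ν) * t ^ s =
      c * (a * (2 * R - a)) ^ s / ((2 * R + t) ^ s * (a + t) ^ (n : ℝ)) := by
  have hxz : ‖p - a • ν - (p - R • ν)‖ ^ 2 = (R - a) ^ 2 := by
    rw [show p - a • ν - (p - R • ν) = (R - a) • ν by module, norm_smul_of_norm_eq_one hν, sq_abs]
  have hyz : ‖p + t • ν - (p - R • ν)‖ ^ 2 = (R + t) ^ 2 := by
    rw [show p + t • ν - (p - R • ν) = (R + t) • ν by module, norm_smul_of_norm_eq_one hν, sq_abs]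
  have hxy : ‖p - a • ν - (p + t • ν)‖ = a + t := by
    rw [show p - a • ν - (p + t • ν) = -(a + t) • ν by module, norm_smul_of_norm_eq_one hν, abs_neg,
      abs_of_nonneg (by linarith)]
  have hts : 0 < t ^ s := Real.rpow_pos_of_pos ht s
  rw [ballPoissonKernel, hxz, hyz, hxy, show R ^ 2 - (R - a) ^ 2 = a * (2 * R - a) by ring,
    show (R + t) ^ 2 - R ^ 2 = t * (2 * R + t) by ring, Real.mul_rpow ht.le (by linarith)]
  field_simp

theorem exteriorBallPoissonKernel_normalRay_mul_rpow (hν : ‖ν‖ = 1) (ha : 0 ≤ a)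
    (ht : 0 < t) (htR : t ≤ 2 * R) :
    exteriorBallPoissonKernel c s (p + R • ν) R (p - a • ν) (p + t • ν) * t ^ s =
      c * (a * (a + 2 * R)) ^ s / ((2 * R - t) ^ s * (a + t) ^ (n : ℝ)) := by
  have hxz : ‖p - a • ν - (p + R • ν)‖ ^ 2 = (a + R) ^ 2 := by
    rw [show p - a • ν - (p + R • ν) = -(a + R) • ν by module, norm_smul_of_norm_eq_one hν,
      sq_abs, neg_sq]
  have hyz : ‖p + t • ν - (p + R • ν)‖ ^ 2 = (t - R) ^ 2 := by
    rw [show p + t • ν - (p + R • ν) = (t - R) • ν by module, norm_smul_of_norm_eq_one hν, sq_abs]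
  have hxy : ‖p - a • ν - (p + t • ν)‖ = a + t := by
    rw [show p - a • ν - (p + t • ν) = -(a + t) • ν by module, norm_smul_of_norm_eq_one hν, abs_neg,
      abs_of_nonneg (by linarith)]
  have hts : 0 < t ^ s := Real.rpow_pos_of_pos ht s
  rw [exteriorBallPoissonKernel, hxz, hyz, hxy, show (a + R) ^ 2 - R ^ 2 = a * (a + 2 * R) by ring,
    show R ^ 2 - (t - R) ^ 2 = t * (2 * R - t) by ring, Real.mul_rpow ht.le (by linarith)]
  field_simp

theorem tendsto_ballPoissonKernel_normalRay_mul_rpow (hν : ‖ν‖ = 1) (hR : 0 < R) (ha : 0 < a) :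
    Tendsto (fun t => ballPoissonKernel c s (p - R • ν) R (p - a • ν) (p + t • ν) * t ^ s)
      (𝓝[>] 0) (𝓝 (ballPoissonKernelBoundaryLimit n c s R a)) := by
  have hcont : ContinuousAt
      (fun t : ℝ => c * (a * (2 * R - a)) ^ s / ((2 * R + t) ^ s * (a + t) ^ (n : ℝ))) 0 := by
    fun_prop (disch := (try left); positivity)
  have := hcont.tendsto
  simp only [add_zero] at this
  refine (this.mono_left nhdsWithin_le_nhds).congr' ?_
  filter_upwards [self_mem_nhdsWithin] with t ht
  exact (ballPoissonKernel_normalRay_mul_rpow hν hR.le ha.le ht).symm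

theorem tendsto_exteriorBallPoissonKernel_normalRay_mul_rpow (hν : ‖ν‖ = 1) (hR : 0 < R)
    (ha : 0 < a) :
    Tendsto (fun t => exteriorBallPoissonKernel c s (p + R • ν) R (p - a • ν) (p + t • ν) * t ^ s)
      (𝓝[>] 0) (𝓝 (exteriorBallPoissonKernelBoundaryLimit n c s R a)) := by
  have hcont : ContinuousAt
      (fun t : ℝ => c * (a * (a + 2 * R)) ^ s / ((2 * R - t) ^ s * (a + t) ^ (n : ℝ))) 0 := by
    fun_prop (disch := (try left); (try simp only [add_zero, sub_zero]); positivity)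
  have := hcont.tendsto
  simp only [add_zero, sub_zero] at this
  refine (this.mono_left nhdsWithin_le_nhds).congr' ?_
  filter_upwards [Ioo_mem_nhdsGT (by positivity : (0 : ℝ) < 2 * R)] with t ht
  exact (exteriorBallPoissonKernel_normalRay_mul_rpow hν ha.le ht.1 ht.2.le).symm

end NormalRay

theorem tendsto_exterior_div_ballPoissonKernelBoundaryLimit (n : ℕ) {c r R : ℝ} (s : ℝ)
    (hc : c ≠ 0) (hr : 0 < r) (hR : 0 < R) :
    Tendsto (fun a => exteriorBallPoissonKernelBoundaryLimit n c s R a /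
      ballPoissonKernelBoundaryLimit n c s r a) (𝓝[>] 0) (𝓝 1) := by
  have hcont :
      ContinuousAt (fun a : ℝ => ((a + 2 * R) / (2 * R) * (2 * r / (2 * r - a))) ^ s) 0 := by
    fun_prop (disch := (try left); (try simp only [sub_zero]); positivity)
  have := hcont.tendsto
  simp only [zero_add, sub_zero] at this
  rw [div_self (by positivity), div_self (by positivity), mul_one, Real.one_rpow] at this
  refine (this.mono_left nhdsWithin_le_nhds).congr' ?_
  filter_upwards [Ioo_mem_nhdsGT (by positivity : (0 : ℝ) < 2 * r)] with a ⟨ha, har⟩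
  have h2r : 0 < 2 * r - a := by linarith
  rw [exteriorBallPoissonKernelBoundaryLimit, ballPoissonKernelBoundaryLimit,
    Real.mul_rpow ha.le (by positivity : 0 ≤ a + 2 * R), Real.mul_rpow ha.le h2r.le,
    Real.mul_rpow (by positivity) (by positivity), Real.div_rpow (by positivity) (by positivity),
    Real.div_rpow (by positivity) h2r.le]
  have : 0 < a ^ s := by positivity
  have : 0 < (2 * r - a) ^ s := by positivity
  have : 0 < a ^ (n : ℝ) := by positivity
  have : 0 < (2 * R) ^ s := by positivity
  have : 0 < (2 * r) ^ s := by positivity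
  field_simp

theorem poisson_boundary_limit_exists_general
    (n : ℕ) (s : ℝ)
    (c : ℝ) (hc : 0 < c)
    (p ν : En n) (hν : ‖ν‖ = 1)
    (rint rext : ℝ) (hrint : 0 < rint) (hrext : 0 < rext)
    (xint xext : En n) (hxint : xint = p - rint • ν) (hxext : xext = p + rext • ν)
    (x₀ : En n) (t₀ : ℝ) (ht₀ : t₀ ∈ Ioo (0 : ℝ) rext)
    (P : En n → ℝ → ℝ)
    -- (a) the tangent-ball sandwich at x̄_η
    (hsandwich : ∀ η ∈ Ioo (0 : ℝ) 1, ∀ t ∈ Ioo (0 : ℝ) t₀,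
      c * (rint ^ 2 - ‖(η • xint + (1 - η) • p) - xint‖ ^ 2) ^ s /
          ((‖p + t • ν - xint‖ ^ 2 - rint ^ 2) ^ s *
            ‖(η • xint + (1 - η) • p) - (p + t • ν)‖ ^ (n : ℝ))
        ≤ P (η • xint + (1 - η) • p) t ∧
      P (η • xint + (1 - η) • p) t ≤
        c * (‖(η • xint + (1 - η) • p) - xext‖ ^ 2 - rext ^ 2) ^ s /
          ((rext ^ 2 - ‖p + t • ν - xext‖ ^ 2) ^ s *
            ‖(η • xint + (1 - η) • p) - (p + t • ν)‖ ^ (n : ℝ)))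
    -- (b) existence of Martin kernel limits
    (hmartin : ∀ η ∈ Ioo (0 : ℝ) 1, ∃ M : ℝ, 0 < M ∧
      Tendsto (fun t : ℝ => P (η • xint + (1 - η) • p) t / P x₀ t)
        (𝓝[>] (0 : ℝ)) (𝓝 M)) :
    ∃ L : ℝ, Tendsto (fun t : ℝ => P x₀ t * t ^ s) (𝓝[>] (0 : ℝ)) (𝓝 L) := by
  subst hxint hxext
  have hray : ∀ η : ℝ, η • (p - rint • ν) + (1 - η) • p = p - (rint * η) • ν := fun η => by module
  simp only [hray] at hsandwich hmartin
  have hbounds : ∀ η ∈ Ioo (0 : ℝ) 1, ∀ t ∈ Ioo (0 : ℝ) t₀,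
      ballPoissonKernel c s (p - rint • ν) rint (p - (rint * η) • ν) (p + t • ν)
        ≤ P (p - (rint * η) • ν) t ∧
      P (p - (rint * η) • ν) t
        ≤ exteriorBallPoissonKernel c s (p + rext • ν) rext (p - (rint * η) • ν) (p + t • ν) :=
    hsandwich
  refine exists_tendsto_of_squeeze_ratio_tendsto_one
    (a := fun η => ballPoissonKernelBoundaryLimit n c s rint (rint * η))
    (b := fun η => exteriorBallPoissonKernelBoundaryLimit n c s rext (rint * η))
    ((tendsto_exterior_div_ballPoissonKernelBoundaryLimit n s hc.ne' hrint hrext).comp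
      (tendsto_iff_comap.2 (comap_mulLeft_nhdsGT_zero hrint).ge)) ?_
  filter_upwards [Ioo_mem_nhdsGT one_pos] with η hη
  obtain ⟨M, hM, hq⟩ := hmartin η hη
  have ha : 0 < rint * η := mul_pos hrint hη.1
  refine ⟨M, _, _,
    (tendsto_ballPoissonKernel_normalRay_mul_rpow (p := p) hν hrint ha).div hq hM.ne',
    (tendsto_exteriorBallPoissonKernel_normalRay_mul_rpow (p := p) hν hrext ha).div hq hM.ne',
    ?_, ?_⟩ <;>
  filter_upwards [Ioo_mem_nhdsGT ht₀.1, hq.eventually_const_lt hM] with t ht hqt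
  · exact div_div_le_mul_of_le hqt
      (mul_le_mul_of_nonneg_right (hbounds η hη t ht).1 (Real.rpow_nonneg ht.1.le s))
  · exact mul_le_div_div_of_le hqt
      (mul_le_mul_of_nonneg_right (hbounds η hη t ht).2 (Real.rpow_nonneg ht.1.le s))

/-- conditional form of Theorem 1.9 of the paper: if `P(x, t)`
(representing `P_Ω(x, p + tν)`) is positive, satisfies the tangent-ball sandwich bounds
at the points `x̄_η = η x_int + (1−η) p`, and Martin kernel limits
`M_η = lim_{t→0⁺} P(x̄_η, t)/P(x₀, t)` exist in `(0, ∞)`, then the limit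
`lim_{t→0⁺} P(x₀, t) t^s` exists and is finite. -/
theorem poisson_boundary_limit_exists
    (n : ℕ) (hn : 1 ≤ n) (s : ℝ) (hs : s ∈ Ioo (0 : ℝ) 1)
    (c : ℝ) (hc : 0 < c)
    (p ν : En n) (hν : ‖ν‖ = 1)
    (rint rext : ℝ) (hrint : 0 < rint) (hrext : 0 < rext)
    (xint xext : En n) (hxint : xint = p - rint • ν) (hxext : xext = p + rext • ν)
    (x₀ : En n) (t₀ : ℝ) (ht₀ : t₀ ∈ Ioo (0 : ℝ) rext)
    (P : En n → ℝ → ℝ)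
    -- P maps into (0,∞) on its domain {x₀} ∪ B_{r_int}(x_int)
    (hPpos : ∀ x ∈ ({x₀} ∪ ball xint rint : Set (En n)), ∀ t ∈ Ioo (0 : ℝ) t₀, 0 < P x t)
    -- (a) the tangent-ball sandwich at x̄_η
    (hsandwich : ∀ η ∈ Ioo (0 : ℝ) 1, ∀ t ∈ Ioo (0 : ℝ) t₀,
      c * (rint ^ 2 - ‖(η • xint + (1 - η) • p) - xint‖ ^ 2) ^ s /
          ((‖p + t • ν - xint‖ ^ 2 - rint ^ 2) ^ s *
            ‖(η • xint + (1 - η) • p) - (p + t • ν)‖ ^ (n : ℝ))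
        ≤ P (η • xint + (1 - η) • p) t ∧
      P (η • xint + (1 - η) • p) t ≤
        c * (‖(η • xint + (1 - η) • p) - xext‖ ^ 2 - rext ^ 2) ^ s /
          ((rext ^ 2 - ‖p + t • ν - xext‖ ^ 2) ^ s *
            ‖(η • xint + (1 - η) • p) - (p + t • ν)‖ ^ (n : ℝ)))
    -- (b) existence of Martin kernel limits
    (hmartin : ∀ η ∈ Ioo (0 : ℝ) 1, ∃ M : ℝ, 0 < M ∧
      Tendsto (fun t : ℝ => P (η • xint + (1 - η) • p) t / P x₀ t)
        (𝓝[>] (0 : ℝ)) (𝓝 M)) :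
    ∃ L : ℝ, Tendsto (fun t : ℝ => P x₀ t * t ^ s) (𝓝[>] (0 : ℝ)) (𝓝 L) :=
  poisson_boundary_limit_exists_general n s c hc p ν hν rint rext hrint hrext xint xext hxint hxext
    x₀ t₀ ht₀ P hsandwich hmartin

end
end
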